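/- Let H, M, J be subgroups of the free group F_k. If H is a free factor of J and H ≤ M ≤ J, then H is a free factor of the intermediate subgroup M. -/

import Mathlib

/-!
Write `J` as an internal free product `H ∗ K`: bases of `H` and of `K` together form a basis of
`J`, and conversely a basis of `M` extending a basis of `H` exhibits `H` as a free factor of `M`.
So it suffices that when a subgroup `M` of a free group `Q` contains some elements of a basis of
`Q`, these elements extend to a basis of `M`.

This refines the Nielsen–Schreier theorem and has the same proof: `M` is the vertex group at the
coset `M` of the action groupoid of `Q` on `Q ⧸ M`, a free groupoid whose generating arrows are
labelled by the basis of `Q`. Given a spanning tree of the generating quiver, the vertex group at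
its root is free on the loops obtained from the generating arrows outside the tree. A basis element
lying in `M` labels a loop at the root, and a loop is never an edge of a tree.
-/

/-- `H` is a free factor of `J`: there is a subgroup `H' ≤ J` such that `J` is the
internal free product of `H` and `H'`, i.e. the homomorphism from the (external)
free product `H ∗ H'` induced by the inclusions is injective with range `J`. -/
def IsFreeFactor {F : Type*} [Group F] (H J : Subgroup F) : Prop :=
  H ≤ J ∧ ∃ H' : Subgroup F, H' ≤ J ∧
    Function.Injective (Monoid.Coprod.lift H.subtype H'.subtype) ∧
    (Monoid.Coprod.lift H.subtype H'.subtype).range = J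

universe u

open Function CategoryTheory Quiver
open scoped Monoid.Coprod

namespace FreeGroupBasis

lemma ofUniqueLift_apply {G : Type u} [Group G] (X : Type u) (of : X → G)
    (h : ∀ {H : Type u} [Group H] (f : X → H), ∃! F : G →* H, ∀ a, F (of a) = f a)
    (x : X) :
    ofUniqueLift X of h x = of x := by
  change (ofUniqueLift X of h).repr.symm (FreeGroup.of x) = of x
  simp [ofUniqueLift, ofLift]

variable {ι κ G K : Type*} [Group G] [Group K]

lemma ne_one (b : FreeGroupBasis ι G) (i : ι) : b i ≠ 1 :=
  fun h => FreeGroup.of_ne_one i <| by rw [← b.repr_apply_coe, h, map_one]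

lemma exists_sum_of_injective {S : Type u} (c : FreeGroupBasis S G) {emb : κ → S}
    (h : Injective emb) :
    ∃ (β : Type u) (c' : FreeGroupBasis (κ ⊕ β) G), ∀ j, c' (.inl j) = c (emb j) := by
  classical
  exact ⟨_, c.reindex ((Equiv.sumCongr (Equiv.ofInjective emb h) (Equiv.refl _)).trans
    (Equiv.sumCompl (· ∈ Set.range emb))).symm, fun j => by simp⟩

def coprod (b : FreeGroupBasis ι G) (b' : FreeGroupBasis κ K) :
    FreeGroupBasis (ι ⊕ κ) (G ∗ K) :=
  ⟨MulEquiv.symm <| MonoidHom.toMulEquiv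
    (FreeGroup.lift (Sum.elim (Monoid.Coprod.inl ∘ b) (Monoid.Coprod.inr ∘ b')))
    (Monoid.Coprod.lift (b.lift (FreeGroup.of ∘ Sum.inl)) (b'.lift (FreeGroup.of ∘ Sum.inr)))
    (by ext (i | i) <;> simp)
    (by ext1 <;> [apply b.ext_hom; apply b'.ext_hom] <;> simp)⟩

@[simp]
lemma coprod_apply_inl (b : FreeGroupBasis ι G) (b' : FreeGroupBasis κ K) (i : ι) :
    b.coprod b' (.inl i) = Monoid.Coprod.inl (b i) :=
  rfl

@[simp]
lemma coprod_apply_inr (b : FreeGroupBasis ι G) (b' : FreeGroupBasis κ K) (i : κ) :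
    b.coprod b' (.inr i) = Monoid.Coprod.inr (b' i) :=
  rfl

end FreeGroupBasis

namespace IsFreeGroupoid.SpanningTree

variable {G : Type u} [Groupoid.{u} G] [IsFreeGroupoid G]
  (T : WideSubquiver (Symmetrify <| Generators G)) [Arborescence T]

/-- Mathlib's `root' T`, which is private. -/
abbrev treeRoot : G := show T from root T

abbrev nonTreeArrows : Set (Total (Generators G)) :=
  (wideSubquiverEquivSetTotal <| wideSubquiverSymmetrify T)ᶜ

lemma loopOfHom_treeRoot (p : End (treeRoot T)) : loopOfHom T p = p := by
  have h : treeHom T (treeRoot T) = 𝟙 (treeRoot T) := treeHom_root T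
  simp only [loopOfHom, h]
  show 𝟙 (treeRoot T) ≫ p ≫ inv (𝟙 (treeRoot T)) = p
  rw [IsIso.inv_id, Category.id_comp, Category.comp_id]

variable {T}

lemma map_homOfPath_eq_one {X : Type u} [Group X] {F : G ⥤ CategoryTheory.SingleObj X}
    (hF : ∀ {a b} (e : a ⟶ b), e ∈ wideSubquiverSymmetrify T a b → F.map (of e) = 1) {a : G}
    (p : Path (root T) a) : F.map (homOfPath T p) = 1 := by
  induction p with
  | nil => exact F.map_id _
  | cons p e ih =>
    refine (F.map_comp (homOfPath T p) _).trans ?_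
    rw [SingleObj.comp_as_mul, ih, mul_one]
    rcases e with ⟨e | e, eT⟩
    · exact hF e (.inl eT)
    · rw [F.map_inv, SingleObj.inv_as_inv, inv_eq_one]
      exact hF e (.inr eT)

lemma map_loopOfHom {X : Type u} [Group X] {F : G ⥤ CategoryTheory.SingleObj X}
    (hF : ∀ {a b} (e : a ⟶ b), e ∈ wideSubquiverSymmetrify T a b → F.map (of e) = 1)
    {a b : G} (q : a ⟶ b) : F.map (loopOfHom T q) = F.map q := by
  simp only [loopOfHom, treeHom, F.map_comp, F.map_inv, SingleObj.comp_as_mul,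
    SingleObj.inv_as_inv, map_homOfPath_eq_one hF, inv_one, mul_one, one_mul]

variable (T)

lemma existsUnique_lift_loopOfHom {X : Type u} [Group X] (f : nonTreeArrows T → X) :
    ∃! F : End (treeRoot T) →* X, ∀ e, F (loopOfHom T (of e.val.hom)) = f e := by
  classical
  let f' : Labelling (Generators G) X := fun a b e =>
    if h : e ∈ wideSubquiverSymmetrify T a b then 1 else f ⟨⟨a, b, e⟩, h⟩
  obtain ⟨F, hF, hF_unique⟩ := unique_lift f'
  have hF_tree :
      ∀ {a b} (e : a ⟶ b), e ∈ wideSubquiverSymmetrify T a b → F.map (of e) = 1 :=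
    fun e h => (hF _ _ e).trans (dif_pos h)
  refine ⟨F.mapEnd _, fun ⟨⟨a, b, e⟩, h⟩ => ?_, fun E hE => ?_⟩
  · change F.map (loopOfHom T (of e)) = _
    exact (map_loopOfHom hF_tree (of e : (show G from a) ⟶ b)).trans
      ((hF _ _ e).trans (dif_neg h))
  · ext p
    have hE_F : functorOfMonoidHom T E = F := by
      refine hF_unique _ fun a b e => ?_
      change E (loopOfHom T _) = dite _ _ _
      split_ifs with h
      · rw [loopOfHom_eq_id T e h]
        exact E.map_one
      · exact hE ⟨⟨a, b, e⟩, h⟩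
    rw [← hE_F]
    change E p = E (loopOfHom T p)
    rw [loopOfHom_treeRoot]

noncomputable def endBasis : FreeGroupBasis (nonTreeArrows T) (End (treeRoot T)) :=
  FreeGroupBasis.ofUniqueLift _ _ (existsUnique_lift_loopOfHom T)

lemma endBasis_apply (e) : endBasis T e = loopOfHom T (of e.val.hom) :=
  FreeGroupBasis.ofUniqueLift_apply _ _ (existsUnique_lift_loopOfHom T) e

end IsFreeGroupoid.SpanningTree

open IsFreeGroupoid IsFreeGroupoid.SpanningTree in
theorem IsFreeGroup.exists_subgroup_basis_extending_of {Q : Type u} [Group Q] [IsFreeGroup Q]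
    (M : Subgroup Q) {κ : Type*} {σ : κ → IsFreeGroup.Generators Q} (hσ : Injective σ)
    (hmem : ∀ j, IsFreeGroup.of (σ j) ∈ M) :
    ∃ (β : Type u) (c : FreeGroupBasis (κ ⊕ β) M),
      ∀ j, (c (.inl j) : Q) = IsFreeGroup.of (σ j) := by
  let r : ActionCategory Q (Q ⧸ M) := ActionCategory.objEquiv Q (Q ⧸ M) ((1 : Q) : Q ⧸ M)
  let r' : Symmetrify (IsFreeGroupoid.Generators (ActionCategory Q (Q ⧸ M))) := r
  have : RootedConnected r' :=
    @generators_connected _ _ (inferInstanceAs (IsConnected (ActionCategory Q (Q ⧸ M)))) _ r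
  let T := geodesicSubtree r'
  have hstab (j : κ) : IsFreeGroup.of (σ j) • ((1 : Q) : Q ⧸ M) = ((1 : Q) : Q ⧸ M) := by
    rw [← MulAction.mem_stabilizer_iff, MulAction.stabilizer_quotient]
    exact hmem j
  let loop (j : κ) : (show IsFreeGroupoid.Generators (ActionCategory Q (Q ⧸ M)) from r) ⟶ r :=
    ⟨σ j, hstab j⟩
  have hloop (j : κ) : loopOfHom T (IsFreeGroupoid.of (loop j)) = IsFreeGroupoid.of (loop j) :=
    loopOfHom_treeRoot T _
  have hloop_not_mem (j : κ) : (⟨_, _, loop j⟩ : Quiver.Total _) ∈ nonTreeArrows T := by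
    intro h
    have h1 := congrArg Subtype.val ((hloop j).symm.trans (loopOfHom_eq_id T (loop j) h))
    exact (IsFreeGroup.basis Q).ne_one (σ j) h1
  let c := (endBasis T).map (ActionCategory.endMulEquivSubgroup M)
  have hc (j : κ) : (c ⟨_, hloop_not_mem j⟩ : Q) = IsFreeGroup.of (σ j) := by
    change (ActionCategory.endMulEquivSubgroup M (endBasis T ⟨_, hloop_not_mem j⟩) : Q) = _
    rw [endBasis_apply, hloop]
    rfl
  have hinj : Injective fun j => (⟨_, hloop_not_mem j⟩ : nonTreeArrows T) := fun j j' h =>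
    hσ <| congrArg (fun e : nonTreeArrows T => (e.val.hom.val : IsFreeGroup.Generators Q)) h
  obtain ⟨β, c', hc'⟩ := c.exists_sum_of_injective hinj
  exact ⟨β, c', fun j => (congrArg Subtype.val (hc' j)).trans (hc j)⟩

theorem FreeGroupBasis.exists_subgroup_basis_extending {Q : Type u} [Group Q] {ι κ : Type*}
    (b : FreeGroupBasis ι Q) (M : Subgroup Q) {σ : κ → ι} (hσ : Injective σ)
    (hmem : ∀ j, b (σ j) ∈ M) :
    ∃ (β : Type u) (c : FreeGroupBasis (κ ⊕ β) M), ∀ j, (c (.inl j) : Q) = b (σ j) := by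
  have := b.isFreeGroup
  -- Bases of a free group have equivalent index types, so an automorphism `θ` of `Q` carries `b`
  -- to the chosen basis, which is the one labelling the generating arrows of the action groupoid.
  let e : IsFreeGroup.Generators Q ≃ ι :=
    .ofFreeGroupEquiv ((IsFreeGroup.toFreeGroup Q).symm.trans b.repr)
  let θ : Q ≃* Q := b.repr.trans ((IsFreeGroup.basis Q).reindex e).repr.symm
  have hθ (i : ι) : θ (b i) = IsFreeGroup.of (e.symm i) := by simp [θ]; rfl
  obtain ⟨β, c, hc⟩ := IsFreeGroup.exists_subgroup_basis_extending_of (M.map (θ : Q →* Q))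
    (e.symm.injective.comp hσ) fun j => hθ (σ j) ▸ Subgroup.mem_map_of_mem _ (hmem j)
  refine ⟨β, c.map (θ.subgroupMap M).symm, fun j => ?_⟩
  simp [hc, ← hθ]

lemma IsFreeFactor.of_basis_sum {G : Type*} [Group G] {α β : Type*} {H M : Subgroup G}
    (b : FreeGroupBasis α H) (c : FreeGroupBasis (α ⊕ β) M)
    (hc : ∀ a, (c (.inl a) : G) = b a) :
    IsFreeFactor H M := by
  let f : FreeGroup β →* G :=
    M.subtype.comp (c.repr.symm.toMonoidHom.comp (FreeGroup.map .inr))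
  have hf : Injective f := M.subtype_injective.comp
    (c.repr.symm.injective.comp (FreeGroup.map_injective Sum.inr_injective))
  let b' : FreeGroupBasis β f.range :=
    (FreeGroupBasis.ofFreeGroup β).map (MonoidHom.ofInjective hf)
  let e : H ∗ f.range ≃* M := (b.coprod b').repr.trans c.repr.symm
  have he : M.subtype.comp e.toMonoidHom = Monoid.Coprod.lift H.subtype f.range.subtype := by
    refine (b.coprod b').ext_hom _ _ fun i => ?_
    have hei : e (b.coprod b' i) = c i := by
      simp only [e, MulEquiv.trans_apply, FreeGroupBasis.repr_apply_coe]
      rfl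
    rw [MonoidHom.comp_apply, MulEquiv.coe_toMonoidHom, hei]
    rcases i with a | a
    · simp [hc]
    · rw [FreeGroupBasis.coprod_apply_inr, Monoid.Coprod.lift_apply_inr]
      rfl
  have hrange : (Monoid.Coprod.lift H.subtype f.range.subtype).range = M := by
    rw [← he, MonoidHom.range_comp, MonoidHom.range_eq_top_of_surjective _ e.surjective,
      ← MonoidHom.range_eq_map, Subgroup.range_subtype]
  refine ⟨fun x hx => hrange ▸ ⟨.inl ⟨x, hx⟩, rfl⟩, f.range, ?_, ?_, hrange⟩
  · rintro _ ⟨x, rfl⟩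
    exact (c.repr.symm _).2
  · rw [← he]
    exact M.subtype_injective.comp e.injective

lemma IsFreeFactor.exists_basis_sum {G : Type u} [Group G] [IsFreeGroup G] {H J : Subgroup G}
    (h : IsFreeFactor H J) {α : Type*} (b : FreeGroupBasis α H) :
    ∃ (β : Type u) (c : FreeGroupBasis (α ⊕ β) J), ∀ a, (c (.inl a) : G) = b a := by
  obtain ⟨-, K, -, hinj, hrange⟩ := h
  let e : H ∗ K ≃* J := (MonoidHom.ofInjective hinj).trans (MulEquiv.subgroupCongr hrange)
  exact ⟨_, (b.coprod (IsFreeGroup.basis K)).map e,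
    fun a => by simp [e, MonoidHom.ofInjective_apply]⟩

lemma IsFreeFactor.of_le_of_le {G : Type u} [Group G] [IsFreeGroup G] {H M J : Subgroup G}
    (hHJ : IsFreeFactor H J) (hHM : H ≤ M) (hMJ : M ≤ J) : IsFreeFactor H M := by
  let bH := IsFreeGroup.basis H
  obtain ⟨_, c, hc⟩ := hHJ.exists_basis_sum bH
  obtain ⟨_, d, hd⟩ := c.exists_subgroup_basis_extending (M.subgroupOf J) Sum.inl_injective
    fun x => Subgroup.mem_subgroupOf.mpr (hc x ▸ hHM (bH x).2)
  exact IsFreeFactor.of_basis_sum bH (d.map (Subgroup.subgroupOfEquivOfLe hMJ))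
    fun x => by simp [hd, hc]

/-- If `H` is a free factor of `J` and `H ≤ M ≤ J`, then `H` is a free factor of the
intermediate subgroup `M`. -/
theorem free_factor_of_intermediate (k : ℕ) (H M J : Subgroup (FreeGroup (Fin k)))
    (hHJ : IsFreeFactor H J) (hHM : H ≤ M) (hMJ : M ≤ J) :
    IsFreeFactor H M :=
  hHJ.of_le_of_le hHM hMJ
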